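/- Fix λ ≥ 0 and define Ψ(y,λ) = H(y) − λ K(y). If y ∈ L²([0,T];ℝ^d) satisfies ‖y‖_T > 0, then for every h ∈ L²([0,T];ℝ^d): Ψ(y+h,λ) − Ψ(y,λ) ≤ ∫₀^T d_y(t,λ)' h_t dt, where d_y(t,λ) = (ω(t)+λ)(θ_t − y_t) − λ|q_α| y_t/‖y‖_T; and if ‖y‖_T = 0, then for every h: Ψ(h,λ) − Ψ(0,λ) ≤ ∫₀^T (ω(t)+λ) θ_t' h_t dt − λ|q_α| ‖h‖_T. In particular Ψ(·,λ) is concave with Fréchet (super)derivative D_y(h,λ) equal to the stated linear functional. -/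

import Mathlib

open MeasureTheory Real Set Filter
open scoped RealInnerProductSpace ENNReal

noncomputable section

abbrev E (d : ℕ) := EuclideanSpace ℝ (Fin d)

/-- ω(t) = T − t + 1 -/
def om (T t : ℝ) : ℝ := T - t + 1

/-- running L²-norm ‖y‖_t = (∫₀^t |y_s|² ds)^{1/2} -/
def nrm {d : ℕ} (y : ℝ → E d) (t : ℝ) : ℝ :=
  Real.sqrt (∫ s in Set.Ioc (0:ℝ) t, ‖y s‖ ^ 2)

/-- running inner product (y,θ)_t = ∫₀^t y_s'θ_s ds -/
def ipr {d : ℕ} (y θ : ℝ → E d) (t : ℝ) : ℝ :=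
  ∫ s in Set.Ioc (0:ℝ) t, ⟪y s, θ s⟫

/-- membership in L²([0,T];ℝ^d) -/
def L2fun {d : ℕ} (T : ℝ) (y : ℝ → E d) : Prop :=
  Measurable y ∧ IntegrableOn (fun t => ‖y t‖ ^ 2) (Set.Ioc 0 T)

def k1 {d : ℕ} (T : ℝ) (θ : ℝ → E d) : ℝ :=
  ∫ t in Set.Ioc (0:ℝ) T, om T t * ‖θ t‖ ^ 2

def k2 {d : ℕ} (T : ℝ) (θ : ℝ → E d) : ℝ :=
  ∫ t in Set.Ioc (0:ℝ) T, om T t ^ 2 * ‖θ t‖ ^ 2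

/-- H(y) = ∫₀^T ω(t)(y_t'θ_t − ½|y_t|²) dt -/
def Hfun {d : ℕ} (T : ℝ) (θ y : ℝ → E d) : ℝ :=
  ∫ t in Set.Ioc (0:ℝ) T, om T t * (⟪y t, θ t⟫ - ‖y t‖ ^ 2 / 2)

/-- K(y) = ½‖y‖_T² + |q_α|‖y‖_T − (y,θ)_T -/
def Kfun {d : ℕ} (T : ℝ) (θ y : ℝ → E d) (qa : ℝ) : ℝ :=
  nrm y T ^ 2 / 2 + |qa| * nrm y T - ipr y θ T

/-! Writing `Kfun` out, `Ψ(y, λ) = ∫₀^T (ω + λ) (y'θ − ½|y|²) dt − λ |q_α| ‖y‖_T`. For `ω + λ ≥ 0`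
the integrand is, for each `t`, a concave quadratic in `y_t` with gradient `(ω + λ)(θ_t − y_t)`,
which gives concavity and the supergradient of the first term after integration. The second term
is `−λ|q_α|` times the norm of the Hilbert space `L²`: it is concave, and Cauchy–Schwarz
`(y, y + h)_T ≤ ‖y‖_T ‖y + h‖_T` gives the supergradient `−λ|q_α| y/‖y‖_T` at `y ≠ 0`. -/

section InnerProductSpace

variable {F : Type*} [NormedAddCommGroup F] [InnerProductSpace ℝ F]

theorem inner_div_norm_le_norm_add_sub_norm {y : F} (hy : 0 < ‖y‖) (h : F) :
    ⟪y, h⟫ / ‖y‖ ≤ ‖y + h‖ - ‖y‖ := by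
  have hcs : ⟪y, y + h⟫ ≤ ‖y‖ * ‖y + h‖ := real_inner_le_norm y (y + h)
  rw [inner_add_right, real_inner_self_eq_norm_sq] at hcs
  rw [div_le_iff₀ hy]
  nlinarith

theorem norm_smul_add_smul_sq_le (u v : F) {c₁ c₂ : ℝ} (hc₁ : 0 ≤ c₁) (hc₂ : 0 ≤ c₂)
    (hc : c₁ + c₂ = 1) : ‖c₁ • u + c₂ • v‖ ^ 2 ≤ c₁ * ‖u‖ ^ 2 + c₂ * ‖v‖ ^ 2 :=
  (convexOn_univ_norm.pow (fun _ _ => norm_nonneg _) 2).2 (mem_univ u) (mem_univ v) hc₁ hc₂ hc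

end InnerProductSpace

namespace MeasureTheory.MemLp

variable {α F : Type*} [MeasurableSpace α] {μ : Measure α}
  [NormedAddCommGroup F] [InnerProductSpace ℝ F] {f g : α → F}

theorem integral_inner_eq_inner_toLp (hf : MemLp f 2 μ) (hg : MemLp g 2 μ) :
    ∫ a, ⟪f a, g a⟫ ∂μ = ⟪hf.toLp f, hg.toLp g⟫ := by
  rw [L2.inner_def]
  refine integral_congr_ae ?_
  filter_upwards [hf.coeFn_toLp, hg.coeFn_toLp] with a hfa hga
  rw [hfa, hga]

theorem integrable_inner (hf : MemLp f 2 μ) (hg : MemLp g 2 μ) :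
    Integrable (fun a => ⟪f a, g a⟫) μ := by
  refine (L2.integrable_inner (𝕜 := ℝ) (hf.toLp f) (hg.toLp g)).congr ?_
  filter_upwards [hf.coeFn_toLp, hg.coeFn_toLp] with a hfa hga
  rw [hfa, hga]

theorem sqrt_integral_norm_sq_eq_norm_toLp (hf : MemLp f 2 μ) :
    √(∫ a, ‖f a‖ ^ 2 ∂μ) = ‖hf.toLp f‖ := by
  simp_rw [← real_inner_self_eq_norm_sq, hf.integral_inner_eq_inner_toLp hf,
    real_inner_self_eq_norm_sq, sqrt_sq (norm_nonneg _)]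

theorem integral_inner_div_le_sqrt_integral_norm_sq_add_sub (hf : MemLp f 2 μ)
    (hg : MemLp g 2 μ) (hpos : 0 < √(∫ a, ‖f a‖ ^ 2 ∂μ)) :
    (∫ a, ⟪f a, g a⟫ ∂μ) / √(∫ a, ‖f a‖ ^ 2 ∂μ)
      ≤ √(∫ a, ‖f a + g a‖ ^ 2 ∂μ) - √(∫ a, ‖f a‖ ^ 2 ∂μ) := by
  have hfg : √(∫ a, ‖f a + g a‖ ^ 2 ∂μ) = ‖hf.toLp f + hg.toLp g‖ :=
    (hf.add hg).sqrt_integral_norm_sq_eq_norm_toLp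
  rw [hf.sqrt_integral_norm_sq_eq_norm_toLp] at hpos ⊢
  rw [hfg, hf.integral_inner_eq_inner_toLp hg]
  exact inner_div_norm_le_norm_add_sub_norm hpos _

theorem sqrt_integral_norm_sq_smul_add_smul_le (hf : MemLp f 2 μ) (hg : MemLp g 2 μ)
    {c₁ c₂ : ℝ} (hc₁ : 0 ≤ c₁) (hc₂ : 0 ≤ c₂) :
    √(∫ a, ‖c₁ • f a + c₂ • g a‖ ^ 2 ∂μ)
      ≤ c₁ * √(∫ a, ‖f a‖ ^ 2 ∂μ) + c₂ * √(∫ a, ‖g a‖ ^ 2 ∂μ) := by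
  have hfg : √(∫ a, ‖c₁ • f a + c₂ • g a‖ ^ 2 ∂μ) = ‖c₁ • hf.toLp f + c₂ • hg.toLp g‖ :=
    ((hf.const_smul c₁).add (hg.const_smul c₂)).sqrt_integral_norm_sq_eq_norm_toLp
  rw [hfg, hf.sqrt_integral_norm_sq_eq_norm_toLp, hg.sqrt_integral_norm_sq_eq_norm_toLp]
  calc _ ≤ ‖c₁ • hf.toLp f‖ + ‖c₂ • hg.toLp g‖ := norm_add_le _ _
    _ = _ := by rw [norm_smul, norm_smul, Real.norm_of_nonneg hc₁, Real.norm_of_nonneg hc₂]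

end MeasureTheory.MemLp

section WeightedQuadratic

variable {α F : Type*} [MeasurableSpace α] [NormedAddCommGroup F] [InnerProductSpace ℝ F]

-- `Hfun T θ` is `weightedQuadratic` for the measure `volume.restrict (Ioc 0 T)` and weight `om T`.
def weightedQuadratic (μ : Measure α) (w : α → ℝ) (θ y : α → F) : ℝ :=
  ∫ a, w a * (⟪y a, θ a⟫ - ‖y a‖ ^ 2 / 2) ∂μ

@[simp]
theorem weightedQuadratic_zero (μ : Measure α) (w : α → ℝ) (θ : α → F) :
    weightedQuadratic μ w θ (fun _ => 0) = 0 := by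
  simp [weightedQuadratic]

theorem mul_quadratic_add_le {w : ℝ} (hw : 0 ≤ w) (θ v h : F) :
    w * (⟪v + h, θ⟫ - ‖v + h‖ ^ 2 / 2) ≤ w * (⟪v, θ⟫ - ‖v‖ ^ 2 / 2) + w * ⟪θ - v, h⟫ := by
  rw [norm_add_sq_real, inner_add_left, inner_sub_left, real_inner_comm θ h]
  nlinarith [mul_nonneg hw (sq_nonneg ‖h‖)]

theorem mul_quadratic_concave {w : ℝ} (hw : 0 ≤ w) (θ u v : F) {c₁ c₂ : ℝ} (hc₁ : 0 ≤ c₁)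
    (hc₂ : 0 ≤ c₂) (hc : c₁ + c₂ = 1) :
    c₁ * (w * (⟪u, θ⟫ - ‖u‖ ^ 2 / 2)) + c₂ * (w * (⟪v, θ⟫ - ‖v‖ ^ 2 / 2))
      ≤ w * (⟪c₁ • u + c₂ • v, θ⟫ - ‖c₁ • u + c₂ • v‖ ^ 2 / 2) := by
  have hsq := mul_le_mul_of_nonneg_left (norm_smul_add_smul_sq_le u v hc₁ hc₂ hc) hw
  rw [inner_add_left, real_inner_smul_left, real_inner_smul_left]
  nlinarith

variable {μ : Measure α} {w : α → ℝ} {C : ℝ} {θ y h : α → F}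

theorem integrable_quadratic (hθ : MemLp θ 2 μ) (hy : MemLp y 2 μ) :
    Integrable (fun a => ⟪y a, θ a⟫ - ‖y a‖ ^ 2 / 2) μ :=
  (hy.integrable_inner hθ).sub (((memLp_two_iff_integrable_sq_norm hy.1).1 hy).div_const 2)

theorem integrable_weight_mul_quadratic (hw : AEStronglyMeasurable w μ)
    (hwC : ∀ᵐ a ∂μ, ‖w a‖ ≤ C) (hθ : MemLp θ 2 μ) (hy : MemLp y 2 μ) :
    Integrable (fun a => w a * (⟪y a, θ a⟫ - ‖y a‖ ^ 2 / 2)) μ :=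
  (integrable_quadratic hθ hy).bdd_mul hw hwC

theorem weightedQuadratic_add_le (hw : AEStronglyMeasurable w μ) (hwC : ∀ᵐ a ∂μ, ‖w a‖ ≤ C)
    (hw₀ : ∀ᵐ a ∂μ, 0 ≤ w a) (hθ : MemLp θ 2 μ) (hy : MemLp y 2 μ) (hh : MemLp h 2 μ) :
    weightedQuadratic μ w θ (fun a => y a + h a)
      ≤ weightedQuadratic μ w θ y + ∫ a, w a * ⟪θ a - y a, h a⟫ ∂μ := by
  have hi₁ := integrable_weight_mul_quadratic hw hwC hθ hy
  have hi₂ : Integrable (fun a => w a * ⟪θ a - y a, h a⟫) μ :=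
    ((hθ.sub hy).integrable_inner hh).bdd_mul hw hwC
  rw [weightedQuadratic, weightedQuadratic, ← integral_add hi₁ hi₂]
  refine integral_mono_ae (integrable_weight_mul_quadratic hw hwC hθ (hy.add hh))
    (hi₁.add hi₂) ?_
  filter_upwards [hw₀] with a ha
  exact mul_quadratic_add_le ha _ _ _

theorem weightedQuadratic_concave (hw : AEStronglyMeasurable w μ) (hwC : ∀ᵐ a ∂μ, ‖w a‖ ≤ C)
    (hw₀ : ∀ᵐ a ∂μ, 0 ≤ w a) {y₁ y₂ : α → F} (hθ : MemLp θ 2 μ) (hy₁ : MemLp y₁ 2 μ)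
    (hy₂ : MemLp y₂ 2 μ) {c₁ c₂ : ℝ} (hc₁ : 0 ≤ c₁) (hc₂ : 0 ≤ c₂) (hc : c₁ + c₂ = 1) :
    c₁ * weightedQuadratic μ w θ y₁ + c₂ * weightedQuadratic μ w θ y₂
      ≤ weightedQuadratic μ w θ (fun a => c₁ • y₁ a + c₂ • y₂ a) := by
  have hi₁ := (integrable_weight_mul_quadratic hw hwC hθ hy₁).const_mul c₁
  have hi₂ := (integrable_weight_mul_quadratic hw hwC hθ hy₂).const_mul c₂
  rw [weightedQuadratic, weightedQuadratic, ← integral_const_mul, ← integral_const_mul,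
    ← integral_add hi₁ hi₂]
  refine integral_mono_ae (hi₁.add hi₂)
    (integrable_weight_mul_quadratic hw hwC hθ ((hy₁.const_smul c₁).add (hy₂.const_smul c₂))) ?_
  filter_upwards [hw₀] with a ha
  exact mul_quadratic_concave ha _ _ _ hc₁ hc₂ hc

theorem weightedQuadratic_add_const (hw : AEStronglyMeasurable w μ)
    (hwC : ∀ᵐ a ∂μ, ‖w a‖ ≤ C) (hθ : MemLp θ 2 μ) (hy : MemLp y 2 μ) (c : ℝ) :
    weightedQuadratic μ (fun a => w a + c) θ y
      = weightedQuadratic μ w θ y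
        + c * ((∫ a, ⟪y a, θ a⟫ ∂μ) - (∫ a, ‖y a‖ ^ 2 ∂μ) / 2) := by
  have hsplit : (fun a => (w a + c) * (⟪y a, θ a⟫ - ‖y a‖ ^ 2 / 2))
      = fun a => w a * (⟪y a, θ a⟫ - ‖y a‖ ^ 2 / 2) + c * (⟪y a, θ a⟫ - ‖y a‖ ^ 2 / 2) := by
    funext a; ring
  rw [weightedQuadratic, hsplit,
    integral_add (integrable_weight_mul_quadratic hw hwC hθ hy)
      ((integrable_quadratic hθ hy).const_mul c),
    integral_const_mul, integral_sub (hy.integrable_inner hθ)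
      (((memLp_two_iff_integrable_sq_norm hy.1).1 hy).div_const 2), integral_div]
  rfl

theorem integral_inner_smul_sub_smul (hw : AEStronglyMeasurable w μ)
    (hwC : ∀ᵐ a ∂μ, ‖w a‖ ≤ C) (hθ : MemLp θ 2 μ) (hy : MemLp y 2 μ) (hh : MemLp h 2 μ)
    (c : ℝ) :
    ∫ a, ⟪w a • (θ a - y a) - c • y a, h a⟫ ∂μ
      = (∫ a, w a * ⟪θ a - y a, h a⟫ ∂μ) - c * ∫ a, ⟪y a, h a⟫ ∂μ := by
  have hi : Integrable (fun a => w a * ⟪θ a - y a, h a⟫) μ :=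
    ((hθ.sub hy).integrable_inner hh).bdd_mul hw hwC
  simp_rw [inner_sub_left _ (c • _), real_inner_smul_left]
  rw [integral_sub hi ((hy.integrable_inner hh).const_mul c), integral_const_mul]

end WeightedQuadratic

section Horizon

variable {d : ℕ} {T : ℝ}

theorem L2fun.memLp {y : ℝ → E d} (hy : L2fun T y) : MemLp y 2 (volume.restrict (Ioc 0 T)) :=
  (memLp_two_iff_integrable_sq_norm hy.1.aestronglyMeasurable).2 hy.2

theorem continuous_om : Continuous (om T) := by
  unfold om; fun_prop

theorem ae_restrict_om_nonneg : ∀ᵐ t ∂(volume.restrict (Ioc 0 T)), 0 ≤ om T t := by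
  filter_upwards [ae_restrict_mem measurableSet_Ioc] with t ht
  unfold om; linarith [ht.2]

theorem ae_restrict_norm_om_le : ∀ᵐ t ∂(volume.restrict (Ioc 0 T)), ‖om T t‖ ≤ T + 1 := by
  filter_upwards [ae_restrict_mem measurableSet_Ioc, ae_restrict_om_nonneg] with t ht h0
  rw [Real.norm_of_nonneg h0]; unfold om; linarith [ht.1]

theorem Hfun_sub_mul_Kfun_eq {θ y : ℝ → E d} (hθ : MemLp θ 2 (volume.restrict (Ioc 0 T)))
    (hy : MemLp y 2 (volume.restrict (Ioc 0 T))) (lam qa : ℝ) :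
    Hfun T θ y - lam * Kfun T θ y qa
      = weightedQuadratic (volume.restrict (Ioc 0 T)) (fun t => om T t + lam) θ y
        - lam * |qa| * nrm y T := by
  rw [weightedQuadratic_add_const continuous_om.aestronglyMeasurable ae_restrict_norm_om_le
    hθ hy lam]
  have hnrm : nrm y T ^ 2 = ∫ t in Ioc 0 T, ‖y t‖ ^ 2 :=
    sq_sqrt (integral_nonneg fun _ => sq_nonneg _)
  rw [Kfun, hnrm, ipr, Hfun, weightedQuadratic]
  ring

end Horizon

theorem stmt17_general {d : ℕ} {T : ℝ}
    (θ : ℝ → E d) (hθm : Measurable θ)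
    (hθ2 : IntegrableOn (fun t => ‖θ t‖ ^ 2) (Set.Ioc 0 T))
    {qa : ℝ}
    {lam : ℝ} (hlam : 0 ≤ lam) :
    (∀ y : ℝ → E d, L2fun T y → 0 < nrm y T →
      ∀ h : ℝ → E d, L2fun T h →
        (Hfun T θ (fun t => y t + h t) - lam * Kfun T θ (fun t => y t + h t) qa)
            - (Hfun T θ y - lam * Kfun T θ y qa)
          ≤ ∫ t in Set.Ioc (0:ℝ) T,
              ⟪(om T t + lam) • (θ t - y t) - (lam * |qa| / nrm y T) • y t, h t⟫) ∧
    (∀ h : ℝ → E d, L2fun T h →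
        (Hfun T θ h - lam * Kfun T θ h qa)
            - (Hfun T θ (fun _ => (0 : E d)) - lam * Kfun T θ (fun _ => (0 : E d)) qa)
          ≤ (∫ t in Set.Ioc (0:ℝ) T, (om T t + lam) * ⟪θ t, h t⟫)
              - lam * |qa| * nrm h T) ∧
    (∀ y1 y2 : ℝ → E d, L2fun T y1 → L2fun T y2 →
      ∀ c1 c2 : ℝ, 0 ≤ c1 → 0 ≤ c2 → c1 + c2 = 1 →
        c1 * (Hfun T θ y1 - lam * Kfun T θ y1 qa)
            + c2 * (Hfun T θ y2 - lam * Kfun T θ y2 qa)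
          ≤ Hfun T θ (fun t => c1 • y1 t + c2 • y2 t)
              - lam * Kfun T θ (fun t => c1 • y1 t + c2 • y2 t) qa) := by
  have hθ := L2fun.memLp ⟨hθm, hθ2⟩
  have hw : AEStronglyMeasurable (fun t => om T t + lam) (volume.restrict (Ioc 0 T)) :=
    (continuous_om.add continuous_const).aestronglyMeasurable
  have hwC : ∀ᵐ t ∂(volume.restrict (Ioc 0 T)), ‖om T t + lam‖ ≤ T + 1 + ‖lam‖ :=
    ae_restrict_norm_om_le.mono fun t ht => (norm_add_le _ _).trans (by linarith)
  have hw₀ : ∀ᵐ t ∂(volume.restrict (Ioc 0 T)), 0 ≤ om T t + lam :=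
    ae_restrict_om_nonneg.mono fun t ht => by linarith
  have hκ : 0 ≤ lam * |qa| := mul_nonneg hlam (abs_nonneg qa)
  refine ⟨fun y hy hpos h hh => ?_, fun h hh => ?_, fun y₁ y₂ hy₁ hy₂ c₁ c₂ hc₁ hc₂ hc => ?_⟩
  · have hQ := weightedQuadratic_add_le hw hwC hw₀ hθ hy.memLp hh.memLp
    have hN : (∫ t in Ioc 0 T, ⟪y t, h t⟫) / nrm y T
        ≤ nrm (fun t => y t + h t) T - nrm y T :=
      hy.memLp.integral_inner_div_le_sqrt_integral_norm_sq_add_sub hh.memLp hpos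
    have hyh : MemLp (fun t => y t + h t) 2 (volume.restrict (Ioc 0 T)) := hy.memLp.add hh.memLp
    rw [Hfun_sub_mul_Kfun_eq hθ hyh, Hfun_sub_mul_Kfun_eq hθ hy.memLp,
      integral_inner_smul_sub_smul hw hwC hθ hy.memLp hh.memLp,
      div_mul_eq_mul_div, mul_div_assoc]
    linarith [mul_le_mul_of_nonneg_left hN hκ]
  · have hQ := weightedQuadratic_add_le hw hwC hw₀ hθ (MemLp.zero' (ε := E d)) hh.memLp
    have hΨ₀ : Hfun T θ (fun _ => 0) - lam * Kfun T θ (fun _ => 0) qa = 0 := by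
      simp [Hfun, Kfun, nrm, ipr]
    rw [Hfun_sub_mul_Kfun_eq hθ hh.memLp, hΨ₀]
    simp only [zero_add, sub_zero, weightedQuadratic_zero] at hQ
    linarith
  · have hz : MemLp (fun t => c₁ • y₁ t + c₂ • y₂ t) 2 (volume.restrict (Ioc 0 T)) :=
      (hy₁.memLp.const_smul c₁).add (hy₂.memLp.const_smul c₂)
    have hQ := weightedQuadratic_concave hw hwC hw₀ hθ hy₁.memLp hy₂.memLp hc₁ hc₂ hc
    have hN : nrm (fun t => c₁ • y₁ t + c₂ • y₂ t) T ≤ c₁ * nrm y₁ T + c₂ * nrm y₂ T :=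
      hy₁.memLp.sqrt_integral_norm_sq_smul_add_smul_le hy₂.memLp hc₁ hc₂
    rw [Hfun_sub_mul_Kfun_eq hθ hy₁.memLp, Hfun_sub_mul_Kfun_eq hθ hy₂.memLp,
      Hfun_sub_mul_Kfun_eq hθ hz]
    linarith [mul_le_mul_of_nonneg_left hN hκ]

/-- concavity and supergradient of Ψ(·,λ) = H − λK. -/
theorem stmt17 {d : ℕ} (hd : 1 ≤ d) {T : ℝ} (hT : 0 < T)
    (θ : ℝ → E d) (hθm : Measurable θ)
    (hθ2 : IntegrableOn (fun t => ‖θ t‖ ^ 2) (Set.Ioc 0 T))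
    {a qa : ℝ} (ha0 : 0 < a) (ha2 : a < 1 / 2) (hqneg : qa < 0)
    (hquant : (∫ s in Set.Iic qa, Real.exp (-s ^ 2 / 2)) = a * Real.sqrt (2 * π))
    {lam : ℝ} (hlam : 0 ≤ lam) :
    (∀ y : ℝ → E d, L2fun T y → 0 < nrm y T →
      ∀ h : ℝ → E d, L2fun T h →
        (Hfun T θ (fun t => y t + h t) - lam * Kfun T θ (fun t => y t + h t) qa)
            - (Hfun T θ y - lam * Kfun T θ y qa)
          ≤ ∫ t in Set.Ioc (0:ℝ) T,
              ⟪(om T t + lam) • (θ t - y t) - (lam * |qa| / nrm y T) • y t, h t⟫) ∧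
    (∀ h : ℝ → E d, L2fun T h →
        (Hfun T θ h - lam * Kfun T θ h qa)
            - (Hfun T θ (fun _ => (0 : E d)) - lam * Kfun T θ (fun _ => (0 : E d)) qa)
          ≤ (∫ t in Set.Ioc (0:ℝ) T, (om T t + lam) * ⟪θ t, h t⟫)
              - lam * |qa| * nrm h T) ∧
    (∀ y1 y2 : ℝ → E d, L2fun T y1 → L2fun T y2 →
      ∀ c1 c2 : ℝ, 0 ≤ c1 → 0 ≤ c2 → c1 + c2 = 1 →
        c1 * (Hfun T θ y1 - lam * Kfun T θ y1 qa)
            + c2 * (Hfun T θ y2 - lam * Kfun T θ y2 qa)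
          ≤ Hfun T θ (fun t => c1 • y1 t + c2 • y2 t)
              - lam * Kfun T θ (fun t => c1 • y1 t + c2 • y2 t) qa) :=
  stmt17_general θ hθm hθ2 hlam
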